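/- arXiv:2210.09057 — 3 statements merged into one kernel-verified Lean document; each statement's English description precedes it below -/
import Mathlib

section
/- Let E⊂ℝⁿ be a measurable set, 0<d, and suppose for a ball B_r: |E∩B_{r/2}| < ε rⁿ and |E∩B_r| > ω_n rⁿ/2^{n+2}, where ω_n is the volume of the unit ball. Let Φ be the radial expansion map with parameter σ (as in the penalization construction) satisfying JΦ ≥ 1+σ on B_r∖B_{r/2} and JΦ ≥ (1−(2ⁿ−1)σ)ⁿ ≥ 1−(2ⁿ−1)nσ on B_{r/2}. If 0<ε<ε₀(n) with ε₀ chosen so that ω_n/2^{n+2} − ε − (2ⁿ−1)nε > 0, then |Φ(E)| − |E| ≥ C(n) σ rⁿ for a positive dimensional constant C(n) = ω_n/2^{n+2} − ε − (2ⁿ−1)nε. -/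
open Metric MeasureTheory

/-- Volume gain under the radial expansion map: if `|E ∩ B_{r/2}| < ε rⁿ` and
`|E ∩ B_r| > ω_n rⁿ / 2^{n+2}`, and `Φ` is an injective map, equal to the identity
outside `B_r`, whose Jacobian `J` satisfies `J ≥ 1+σ` on `B_r ∖ B_{r/2}` and
`J ≥ 1 − (2ⁿ−1)nσ` on `B_{r/2}`, with `|Φ(E)| = ∫_E J`, then
`|Φ(E)| − |E| ≥ (ω_n/2^{n+2} − ε − (2ⁿ−1)nε) σ rⁿ`. -/
theorem volume_gain {n : ℕ} (r σ ε : ℝ) (hr : 0 < r) (hσ0 : 0 < σ)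
    (hσ1 : σ < 1 / 2 ^ n)
    (E : Set (EuclideanSpace ℝ (Fin n))) (hE : MeasurableSet E)
    (hEfin : volume E < ⊤)
    (Φ : EuclideanSpace ℝ (Fin n) → EuclideanSpace ℝ (Fin n))
    (J : EuclideanSpace ℝ (Fin n) → ℝ)
    (hJint : IntegrableOn J E volume)
    (hchange : (volume (Φ '' E)).toReal = ∫ x in E, J x)
    (hJann : ∀ x ∈ ball (0 : EuclideanSpace ℝ (Fin n)) r \
        ball (0 : EuclideanSpace ℝ (Fin n)) (r / 2), 1 + σ ≤ J x)
    (hJin : ∀ x ∈ ball (0 : EuclideanSpace ℝ (Fin n)) (r / 2),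
        1 - (2 ^ n - 1) * n * σ ≤ J x)
    (hJout : ∀ x, x ∉ ball (0 : EuclideanSpace ℝ (Fin n)) r → J x = 1)
    (hdens1 : volume (E ∩ ball (0 : EuclideanSpace ℝ (Fin n)) (r / 2)) <
        ENNReal.ofReal (ε * r ^ n))
    (hdens2 : ENNReal.ofReal
        ((volume (ball (0 : EuclideanSpace ℝ (Fin n)) 1)).toReal * r ^ n / 2 ^ (n + 2)) <
        volume (E ∩ ball (0 : EuclideanSpace ℝ (Fin n)) r))
    (hε0 : 0 < ε)
    (hε : 0 < (volume (ball (0 : EuclideanSpace ℝ (Fin n)) 1)).toReal / 2 ^ (n + 2)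
        - ε - (2 ^ n - 1) * n * ε) :
    ((volume (ball (0 : EuclideanSpace ℝ (Fin n)) 1)).toReal / 2 ^ (n + 2)
        - ε - (2 ^ n - 1) * n * ε) * σ * r ^ n ≤
      (volume (Φ '' E)).toReal - (volume E).toReal := by
  set B := ball (0 : EuclideanSpace ℝ (Fin n)) r with hB
  set Bh := ball (0 : EuclideanSpace ℝ (Fin n)) (r/2) with hBh
  have hBhB : Bh ⊆ B := ball_subset_ball (by linarith)
  set s₁ := E ∩ Bh with hs₁
  set s₂ := E ∩ (B \ Bh) with hs₂
  set s₃ := E \ B with hs₃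
  have hm1 : MeasurableSet s₁ := hE.inter measurableSet_ball
  have hm2 : MeasurableSet s₂ := hE.inter (measurableSet_ball.diff measurableSet_ball)
  have hm3 : MeasurableSet s₃ := hE.diff measurableSet_ball
  have hUnion : E = (s₁ ∪ s₂) ∪ s₃ := by
    ext x
    constructor
    · intro hx
      by_cases h1 : x ∈ Bh
      · exact Or.inl (Or.inl ⟨hx, h1⟩)
      · by_cases h2 : x ∈ B
        · exact Or.inl (Or.inr ⟨hx, h2, h1⟩)
        · exact Or.inr ⟨hx, h2⟩
    · rintro ((⟨h, -⟩ | ⟨h, -⟩) | ⟨h, -⟩) <;> exact h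
  have hd12 : Disjoint s₁ s₂ := by
    apply Set.disjoint_left.2
    rintro x ⟨-, hx1⟩ ⟨-, -, hx2⟩
    exact hx2 hx1
  have hd3 : Disjoint (s₁ ∪ s₂) s₃ := by
    apply Set.disjoint_left.2
    rintro x (⟨-, hx1⟩ | ⟨-, hx1, -⟩) ⟨-, hx2⟩
    · exact hx2 (hBhB hx1)
    · exact hx2 hx1
  have hsubE : ∀ s : Set (EuclideanSpace ℝ (Fin n)), s ⊆ E → volume s ≠ ⊤ :=
    fun s hs => ((measure_mono hs).trans_lt hEfin).ne
  have hf1 : volume s₁ ≠ ⊤ := hsubE _ Set.inter_subset_left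
  have hf2 : volume s₂ ≠ ⊤ := hsubE _ Set.inter_subset_left
  have hf3 : volume s₃ ≠ ⊤ := hsubE _ Set.diff_subset
  have hfR : volume (E ∩ B) ≠ ⊤ := hsubE _ Set.inter_subset_left
  -- g = J - 1
  set g : EuclideanSpace ℝ (Fin n) → ℝ := fun x => J x - 1 with hg
  have hgint : IntegrableOn g E volume :=
    hJint.sub (integrableOn_const hEfin.ne)
  have hg1 : IntegrableOn g s₁ volume := hgint.mono_set Set.inter_subset_left
  have hg2 : IntegrableOn g s₂ volume := hgint.mono_set Set.inter_subset_left
  have hg3 : IntegrableOn g s₃ volume := hgint.mono_set Set.diff_subset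
  have hsplit : ∫ x in E, g x = (∫ x in s₁, g x) + (∫ x in s₂, g x) + (∫ x in s₃, g x) := by
    rw [hUnion, setIntegral_union hd3 hm3 (hg1.union hg2) hg3,
      setIntegral_union hd12 hm2 hg1 hg2]
  have hI3 : ∫ x in s₃, g x = 0 := by
    rw [setIntegral_congr_fun hm3 (g := fun _ => (0 : ℝ))
      (fun x hx => by simp [hg, hJout x hx.2]), integral_zero]
  have hI2 : σ * (volume s₂).toReal ≤ ∫ x in s₂, g x :=
    setIntegral_ge_of_const_le_real hm2 hf2
      (fun x hx => by have := hJann x hx.2; simp only [hg]; linarith) hg2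
  have hI1 : (-((2 ^ n - 1) * n * σ)) * (volume s₁).toReal ≤ ∫ x in s₁, g x :=
    setIntegral_ge_of_const_le_real hm1 hf1
      (fun x hx => by have := hJin x hx.2; simp only [hg]; linarith) hg1
  -- measure arithmetic
  have hadd : volume (E ∩ B) = volume s₁ + volume s₂ := by
    have : E ∩ B = s₁ ∪ s₂ := by
      ext x
      constructor
      · rintro ⟨hx, hxB⟩
        by_cases h1 : x ∈ Bh
        · exact Or.inl ⟨hx, h1⟩
        · exact Or.inr ⟨hx, hxB, h1⟩
      · rintro (⟨h, hx⟩ | ⟨h, hx, -⟩) <;> exact ⟨h, by first | exact hBhB hx | exact hx⟩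
    rw [this, measure_union hd12 hm2]
  have haddR : (volume (E ∩ B)).toReal = (volume s₁).toReal + (volume s₂).toReal := by
    rw [hadd, ENNReal.toReal_add hf1 hf2]
  set ω := (volume (ball (0 : EuclideanSpace ℝ (Fin n)) 1)).toReal with hω
  have hωnn : 0 ≤ ω := ENNReal.toReal_nonneg
  have hrn : (0:ℝ) < r ^ n := pow_pos hr n
  have hRlb : ω * r ^ n / 2 ^ (n + 2) < (volume (E ∩ B)).toReal := by
    rw [← ENNReal.ofReal_lt_iff_lt_toReal (by positivity) hfR]
    exact hdens2
  have hm1ub : (volume s₁).toReal < ε * r ^ n := by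
    rw [← ENNReal.lt_ofReal_iff_toReal_lt hf1]
    exact hdens1
  have hm1nn : 0 ≤ (volume s₁).toReal := ENNReal.toReal_nonneg
  have hc : (0:ℝ) ≤ (2 ^ n - 1) * n * σ := by
    have h1 : (1:ℝ) ≤ 2 ^ n := one_le_pow₀ (by norm_num)
    exact mul_nonneg (mul_nonneg (by linarith) n.cast_nonneg) hσ0.le
  have hEt : ∫ x in E, (1:ℝ) = (volume E).toReal := by
    simp [hEfin.ne, Measure.real]
  have key : ∫ x in E, g x = (volume (Φ '' E)).toReal - (volume E).toReal := by
    rw [hchange, ← hEt, ← integral_sub hJint (integrableOn_const hEfin.ne)]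
  rw [← key, hsplit, hI3, add_zero]
  have h2 : σ * ((volume (E ∩ B)).toReal - (volume s₁).toReal) ≤ ∫ x in s₂, g x := by
    rw [haddR]; ring_nf; ring_nf at hI2; linarith
  have hA : (-((2 ^ n - 1) * n * σ)) * (ε * r ^ n) ≤ (-((2 ^ n - 1) * n * σ)) * (volume s₁).toReal := by
    have := mul_le_mul_of_nonneg_left hm1ub.le hc
    linarith
  have hB2 : σ * (ω * r ^ n / 2 ^ (n + 2) - ε * r ^ n) ≤
      σ * ((volume (E ∩ B)).toReal - (volume s₁).toReal) :=
    mul_le_mul_of_nonneg_left (by linarith) hσ0.le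
  have heq : (ω / 2 ^ (n + 2) - ε - (2 ^ n - 1) * ↑n * ε) * σ * r ^ n
      = σ * (ω * r ^ n / 2 ^ (n + 2) - ε * r ^ n) + (-((2 ^ n - 1) * ↑n * σ)) * (ε * r ^ n) := by
    ring
  linarith
end

section
/- Let g_h ⇀ g weakly in H¹(D) (D⊂ℝ^{n−1} open ball) with g_h = (f_h − a_h)/√ε_h where f_h are 1-Lipschitz, ∫_D |∇'f_h|² dx' ≤ C ε_h, and ε_h→0. If for every φ∈C¹_c(D) one has lim_h ε_h^{−1/2} ∫_D ⟨∇'f_h, ∇'φ⟩ / √(1+|∇'f_h|²) dx' = 0, then g is harmonic in D, i.e., ∫_D ⟨∇'g, ∇'φ⟩ dx' = 0 for all φ∈C¹_c(D). -/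
/-!
The rescaled gradients `∇g_h = ε_h^{-1/2} ∇f_h` satisfy `∫ ⟨∇g_h, ∇φ⟩ → ∫ ⟨∇g, ∇φ⟩`, so it
suffices that `ε_h^{-1/2} ∫ ⟨∇f_h, ∇φ⟩ → 0`. The hypothesis gives this for the integrand divided
by `√(1 + |∇f_h|²)`, and the two integrands differ pointwise by at most `|∇φ| |∇f_h|²`, whose
integral is `O(ε_h) = o(√ε_h)`.
-/

open MeasureTheory Metric Filter Topology
open scoped InnerProductSpace

section Gradient

variable {F : Type*} [NormedAddCommGroup F] [InnerProductSpace ℝ F] [CompleteSpace F]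

lemma norm_gradient (f : F → ℝ) (x : F) : ‖gradient f x‖ = ‖fderiv ℝ f x‖ :=
  (InnerProductSpace.toDual ℝ F).symm.norm_map _

lemma norm_gradient_le_of_lipschitz {f : F → ℝ} {K : NNReal} (hf : LipschitzWith K f) (x : F) :
    ‖gradient f x‖ ≤ K :=
  (norm_gradient f x).trans_le (norm_fderiv_le_of_lipschitz ℝ hf)

lemma gradient_sub_const_div (f : F → ℝ) (a c : ℝ) (x : F) :
    gradient (fun y => (f y - a) / c) x = c⁻¹ • gradient f x := by
  have hfun : (fun y => (f y - a) / c) = c⁻¹ • fun y => f y - a := by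
    funext y; simp [div_eq_inv_mul]
  rw [gradient, gradient, hfun, fderiv_const_smul_field, Pi.smul_apply, fderiv_sub_const,
    map_smul]

lemma measurable_gradient [MeasurableSpace F] [BorelSpace F] (f : F → ℝ) :
    Measurable (gradient f) :=
  (InnerProductSpace.toDual ℝ F).symm.continuous.measurable.comp (measurable_fderiv ℝ f)

end Gradient

section AreaLinearization

variable {F : Type*} [NormedAddCommGroup F] [InnerProductSpace ℝ F]

lemma abs_inner_sub_inner_div_sqrt_le (u v : F) :
    |⟪u, v⟫_ℝ - ⟪u, v⟫_ℝ / √(1 + ‖u‖ ^ 2)| ≤ ‖v‖ * ‖u‖ ^ 2 := by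
  set t := ‖u‖
  set s := √(1 + t ^ 2)
  have ht : 0 ≤ t := norm_nonneg u
  have hs1 : 1 ≤ s := Real.one_le_sqrt.2 (by nlinarith)
  have hst : s ≤ 1 + t := Real.sqrt_le_iff.2 ⟨by linarith, by nlinarith⟩
  -- `1 - 1/s ≤ s - 1 ≤ t`, so the relative error is at most `t`
  have hfac : 0 ≤ 1 - s⁻¹ ∧ t * (1 - s⁻¹) ≤ t ^ 2 := by
    have hinv : 1 - s⁻¹ ≤ t := by
      have : 1 - s⁻¹ = (s - 1) / s := by field_simp
      rw [this, div_le_iff₀ (by linarith)]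
      nlinarith
    exact ⟨by linarith [inv_le_one_of_one_le₀ hs1], by nlinarith⟩
  calc |⟪u, v⟫_ℝ - ⟪u, v⟫_ℝ / s| = |⟪u, v⟫_ℝ| * (1 - s⁻¹) := by
        rw [div_eq_mul_inv, ← mul_one_sub, abs_mul, abs_of_nonneg hfac.1]
    _ ≤ t * ‖v‖ * (1 - s⁻¹) :=
        mul_le_mul_of_nonneg_right (abs_real_inner_le_norm u v) hfac.1
    _ ≤ ‖v‖ * t ^ 2 := by nlinarith [norm_nonneg v]

lemma abs_integral_inner_sub_integral_inner_div_sqrt_le {α : Type*} [MeasurableSpace α]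
    {μ : Measure α} [IsFiniteMeasure μ] {u v : α → F} {M : ℝ}
    (hu : AEStronglyMeasurable u μ) (hv : AEStronglyMeasurable v μ)
    (hu1 : ∀ x, ‖u x‖ ≤ 1) (hvM : ∀ x, ‖v x‖ ≤ M) :
    |∫ x, ⟪u x, v x⟫_ℝ ∂μ - ∫ x, ⟪u x, v x⟫_ℝ / √(1 + ‖u x‖ ^ 2) ∂μ|
      ≤ M * ∫ x, ‖u x‖ ^ 2 ∂μ := by
  have hX : Integrable (fun x => ⟪u x, v x⟫_ℝ) μ :=
    .of_bound (hu.inner hv) M <| .of_forall fun x => by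
      simpa using (abs_real_inner_le_norm (u x) (v x)).trans
        ((mul_le_of_le_one_left (norm_nonneg _) (hu1 x)).trans (hvM x))
  have hu2 : Integrable (fun x => ‖u x‖ ^ 2) μ :=
    .of_bound (hu.norm.pow 2) 1 <| .of_forall fun x => by
      simpa [abs_of_nonneg (norm_nonneg _)] using pow_le_one₀ (n := 2) (norm_nonneg _) (hu1 x)
  have hY : Integrable (fun x => ⟪u x, v x⟫_ℝ / √(1 + ‖u x‖ ^ 2)) μ :=
    hX.mono (hX.aestronglyMeasurable.div₀
        ((continuous_const.add (continuous_norm.pow 2)).sqrt.comp_aestronglyMeasurable hu))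
      (.of_forall fun x => by
        simp only [Real.norm_eq_abs, abs_div, abs_of_nonneg (Real.sqrt_nonneg _)]
        exact div_le_self (abs_nonneg _) (Real.one_le_sqrt.2 (by nlinarith [sq_nonneg ‖u x‖])))
  rw [← integral_sub hX hY, ← integral_const_mul]
  refine (abs_integral_le_integral_abs).trans (integral_mono (hX.sub hY).abs (hu2.const_mul M)
    fun x => (abs_inner_sub_inner_div_sqrt_le (u x) (v x)).trans ?_)
  exact mul_le_mul_of_nonneg_right (hvM x) (sq_nonneg _)

end AreaLinearization

lemma tendsto_inv_sqrt_mul_of_abs_le {ι : Type*} {l : Filter ι} {ε d : ι → ℝ} {K : ℝ}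
    (hε : Tendsto ε l (𝓝 0)) (hd : ∀ i, |d i| ≤ K * ε i) :
    Tendsto (fun i => (√(ε i))⁻¹ * d i) l (𝓝 0) := by
  have hsqrt : Tendsto (fun i => K * √(ε i)) l (𝓝 0) := by
    simpa using (Real.continuous_sqrt.tendsto 0 |>.comp hε).const_mul K
  refine squeeze_zero_norm (fun i => ?_) hsqrt
  calc ‖(√(ε i))⁻¹ * d i‖ = (√(ε i))⁻¹ * |d i| := by
        rw [norm_mul, norm_inv, Real.norm_of_nonneg (Real.sqrt_nonneg _), Real.norm_eq_abs]
    _ ≤ (√(ε i))⁻¹ * (K * ε i) := by gcongr; exact hd i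
    _ = K * (ε i / √(ε i)) := by ring
    _ = K * √(ε i) := by rw [Real.div_sqrt]

theorem blowup_limit_harmonic_general {m : ℕ} (R : ℝ)
    (f : ℕ → EuclideanSpace ℝ (Fin m) → ℝ)
    (hLip : ∀ h, LipschitzWith 1 (f h))
    (ε : ℕ → ℝ) (hε0 : Tendsto ε atTop (𝓝 0))
    (C : ℝ)
    (hgrad : ∀ h, ∫ x in ball (0 : EuclideanSpace ℝ (Fin m)) R,
      ‖gradient (f h) x‖ ^ 2 ≤ C * ε h)
    (a : ℕ → ℝ) (g : EuclideanSpace ℝ (Fin m) → ℝ)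
    (hweakH1 : ∀ φ : EuclideanSpace ℝ (Fin m) → ℝ, ContDiff ℝ 1 φ →
      HasCompactSupport φ → tsupport φ ⊆ ball (0 : EuclideanSpace ℝ (Fin m)) R →
      Tendsto (fun h => ∫ x in ball (0 : EuclideanSpace ℝ (Fin m)) R,
          (inner ℝ (gradient (fun y => (f h y - a h) / Real.sqrt (ε h)) x)
            (gradient φ x) : ℝ)) atTop
        (𝓝 (∫ x in ball (0 : EuclideanSpace ℝ (Fin m)) R,
          (inner ℝ (gradient g x) (gradient φ x) : ℝ))))
    (hkey : ∀ φ : EuclideanSpace ℝ (Fin m) → ℝ, ContDiff ℝ 1 φ →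
      HasCompactSupport φ → tsupport φ ⊆ ball (0 : EuclideanSpace ℝ (Fin m)) R →
      Tendsto (fun h => (Real.sqrt (ε h))⁻¹ *
          ∫ x in ball (0 : EuclideanSpace ℝ (Fin m)) R,
            (inner ℝ (gradient (f h) x) (gradient φ x) : ℝ) /
              Real.sqrt (1 + ‖gradient (f h) x‖ ^ 2)) atTop (𝓝 0)) :
    ∀ φ : EuclideanSpace ℝ (Fin m) → ℝ, ContDiff ℝ 1 φ → HasCompactSupport φ →
      tsupport φ ⊆ ball (0 : EuclideanSpace ℝ (Fin m)) R →
      ∫ x in ball (0 : EuclideanSpace ℝ (Fin m)) R,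
        (inner ℝ (gradient g x) (gradient φ x) : ℝ) = 0 := by
  intro φ hφ hφc hφs
  have : IsFiniteMeasure (volume.restrict (ball (0 : EuclideanSpace ℝ (Fin m)) R)) :=
    isFiniteMeasure_restrict.2 measure_ball_lt_top.ne
  obtain ⟨M, hM⟩ := (hφc.fderiv (𝕜 := ℝ)).exists_bound_of_continuous
    (hφ.continuous_fderiv one_ne_zero)
  have hφM : ∀ x, ‖gradient φ x‖ ≤ M := fun x => (norm_gradient φ x).trans_le (hM x)
  have hM0 : 0 ≤ M := (norm_nonneg _).trans (hφM 0)
  have herror := tendsto_inv_sqrt_mul_of_abs_le (K := M * C) hε0 fun h =>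
    (abs_integral_inner_sub_integral_inner_div_sqrt_le
      (measurable_gradient (f h)).aestronglyMeasurable
      (measurable_gradient φ).aestronglyMeasurable
      (fun x => by simpa using norm_gradient_le_of_lipschitz (hLip h) x) hφM).trans
    (by rw [mul_assoc]; exact mul_le_mul_of_nonneg_left (hgrad h) hM0)
  refine tendsto_nhds_unique (hweakH1 φ hφ hφc hφs) ?_
  simp_rw [gradient_sub_const_div, real_inner_smul_left, integral_const_mul]
  simpa only [mul_sub, sub_add_cancel, add_zero] using herror.add (hkey φ hφ hφc hφs)

/-- Blow-up step in the excess improvement: let `f_h` be 1-Lipschitz with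
`∫_D |∇'f_h|² ≤ C ε_h`, `ε_h → 0`, and let `g_h = (f_h − a_h)/√ε_h ⇀ g` weakly in
`H¹(D)`.  If `ε_h^{−1/2} ∫_D ⟨∇'f_h, ∇'φ⟩/√(1+|∇'f_h|²) dx' → 0` for every
`φ ∈ C¹_c(D)`, then `g` is harmonic: `∫_D ⟨∇'g, ∇'φ⟩ dx' = 0` for all such `φ`. -/
theorem blowup_limit_harmonic {m : ℕ} (R : ℝ) (hR : 0 < R)
    (f : ℕ → EuclideanSpace ℝ (Fin m) → ℝ)
    (hLip : ∀ h, LipschitzWith 1 (f h))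
    (ε : ℕ → ℝ) (hεpos : ∀ h, 0 < ε h) (hε0 : Tendsto ε atTop (𝓝 0))
    (C : ℝ) (hC : 0 < C)
    (hgrad : ∀ h, ∫ x in ball (0 : EuclideanSpace ℝ (Fin m)) R,
      ‖gradient (f h) x‖ ^ 2 ≤ C * ε h)
    (a : ℕ → ℝ) (g : EuclideanSpace ℝ (Fin m) → ℝ)
    (hweakL2 : ∀ φ : EuclideanSpace ℝ (Fin m) → ℝ, ContDiff ℝ 1 φ →
      HasCompactSupport φ → tsupport φ ⊆ ball (0 : EuclideanSpace ℝ (Fin m)) R →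
      Tendsto (fun h => ∫ x in ball (0 : EuclideanSpace ℝ (Fin m)) R,
          ((f h x - a h) / Real.sqrt (ε h)) * φ x) atTop
        (𝓝 (∫ x in ball (0 : EuclideanSpace ℝ (Fin m)) R, g x * φ x)))
    (hweakH1 : ∀ φ : EuclideanSpace ℝ (Fin m) → ℝ, ContDiff ℝ 1 φ →
      HasCompactSupport φ → tsupport φ ⊆ ball (0 : EuclideanSpace ℝ (Fin m)) R →
      Tendsto (fun h => ∫ x in ball (0 : EuclideanSpace ℝ (Fin m)) R,
          (inner ℝ (gradient (fun y => (f h y - a h) / Real.sqrt (ε h)) x)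
            (gradient φ x) : ℝ)) atTop
        (𝓝 (∫ x in ball (0 : EuclideanSpace ℝ (Fin m)) R,
          (inner ℝ (gradient g x) (gradient φ x) : ℝ))))
    (hkey : ∀ φ : EuclideanSpace ℝ (Fin m) → ℝ, ContDiff ℝ 1 φ →
      HasCompactSupport φ → tsupport φ ⊆ ball (0 : EuclideanSpace ℝ (Fin m)) R →
      Tendsto (fun h => (Real.sqrt (ε h))⁻¹ *
          ∫ x in ball (0 : EuclideanSpace ℝ (Fin m)) R,
            (inner ℝ (gradient (f h) x) (gradient φ x) : ℝ) /
              Real.sqrt (1 + ‖gradient (f h) x‖ ^ 2)) atTop (𝓝 0)) :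
    ∀ φ : EuclideanSpace ℝ (Fin m) → ℝ, ContDiff ℝ 1 φ → HasCompactSupport φ →
      tsupport φ ⊆ ball (0 : EuclideanSpace ℝ (Fin m)) R →
      ∫ x in ball (0 : EuclideanSpace ℝ (Fin m)) R,
        (inner ℝ (gradient g x) (gradient φ x) : ℝ) = 0 :=
  blowup_limit_harmonic_general R f hLip ε hε0 C hgrad a g hweakH1 hkey
end

section
/- Let ε₁, τ, γ, σ ∈ (0,1), C>0 with 2Cτ^γ < ε₁ and τ^γ < 1/2, and let (a_h)_{h≥0} be a nonnegative sequence satisfying a_0 ≤ ε₁ τ^0 (σ r)^{n−1} and the recursion a_{h+1} ≤ C[τⁿ a_h + τ^{nα} (στ^h r)^{nα}] where nα = (n−1)+γ, r<min{1, ε₁^{1/γ}}, σ^γ < τ^{n(1−α)} and 2Cτ^{n(1−α)} < 1. Then a_h ≤ ε₁ τ^{γh} (στ^h r)^{n−1} for all h≥0, and consequently a_h/(στ^h r)^{n−1} → 0 as h→∞. -/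
open Filter Topology

/-- Abstract geometric iteration from the density lower bound proof: under the
smallness conditions on `τ, σ, r`, a nonnegative sequence with
`a₀ ≤ ε₁ (σr)^{n−1}` and `a_{h+1} ≤ C[τⁿ a_h + τ^{nα} (στ^h r)^{nα}]` (where
`nα = (n−1)+γ`) satisfies `a_h ≤ ε₁ τ^{γh} (στ^h r)^{n−1}` for all `h`, and hence
`a_h/(στ^h r)^{n−1} → 0`. -/
theorem density_lower_bound_iteration (n : ℕ) (α ε₁ τ γ σ C r : ℝ)
    (hε₁ : ε₁ ∈ Set.Ioo (0:ℝ) 1) (hτ : τ ∈ Set.Ioo (0:ℝ) 1)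
    (hγ : γ ∈ Set.Ioo (0:ℝ) 1) (hσ : σ ∈ Set.Ioo (0:ℝ) 1) (hC : 0 < C)
    (h1 : 2 * C * τ ^ γ < ε₁) (h2 : τ ^ γ < 1 / 2)
    (hnα : (n : ℝ) * α = ((n : ℝ) - 1) + γ)
    (hr0 : 0 < r) (hr : r < min 1 (ε₁ ^ (1 / γ)))
    (h3 : σ ^ γ < τ ^ ((n : ℝ) * (1 - α))) (h4 : 2 * C * τ ^ ((n : ℝ) * (1 - α)) < 1)
    (a : ℕ → ℝ) (hapos : ∀ h, 0 ≤ a h)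
    (ha0 : a 0 ≤ ε₁ * (σ * r) ^ ((n : ℝ) - 1))
    (hrec : ∀ h : ℕ, a (h + 1) ≤
      C * (τ ^ (n : ℝ) * a h + τ ^ ((n : ℝ) * α) * (σ * τ ^ (h : ℝ) * r) ^ ((n : ℝ) * α))) :
    (∀ h : ℕ, a h ≤ ε₁ * τ ^ (γ * (h : ℝ)) * (σ * τ ^ (h : ℝ) * r) ^ ((n : ℝ) - 1)) ∧
    Tendsto (fun h : ℕ => a h / (σ * τ ^ (h : ℝ) * r) ^ ((n : ℝ) - 1)) atTop (𝓝 0) := by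
  obtain ⟨hτ0, hτ1⟩ := hτ
  obtain ⟨hγ0, hγ1⟩ := hγ
  obtain ⟨hσ0, hσ1⟩ := hσ
  obtain ⟨hε0, hε1'⟩ := hε₁
  have hn1γ : (n : ℝ) * (1 - α) = 1 - γ := by linear_combination -hnα
  rw [hn1γ] at h3 h4
  -- r ^ γ < ε₁
  have hrγ : r ^ γ < ε₁ := by
    have hrlt : r < ε₁ ^ (1 / γ) := lt_of_lt_of_le hr (min_le_right _ _)
    have := Real.rpow_lt_rpow hr0.le hrlt hγ0
    rwa [← Real.rpow_mul hε0.le, one_div_mul_cancel (ne_of_gt hγ0), Real.rpow_one] at this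
  have hCσr : C * σ ^ γ * r ^ γ ≤ ε₁ / 2 := by
    have hσγ0 : 0 < σ ^ γ := Real.rpow_pos_of_pos hσ0 _
    have hrγ0 : 0 < r ^ γ := Real.rpow_pos_of_pos hr0 _
    have hA : C * σ ^ γ < 1 / 2 := by nlinarith [mul_lt_mul_of_pos_left h3 hC]
    have := mul_lt_mul'' hA hrγ (mul_pos hC hσγ0).le hrγ0.le
    linarith
  have hP : ∀ h : ℕ, (0:ℝ) < σ * τ ^ (h : ℝ) * r :=
    fun h => mul_pos (mul_pos hσ0 (Real.rpow_pos_of_pos hτ0 _)) hr0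
  have key : ∀ h : ℕ, a h ≤ ε₁ * τ ^ (γ * (h : ℝ)) * (σ * τ ^ (h : ℝ) * r) ^ ((n : ℝ) - 1) := by
    intro h
    induction h with
    | zero => simpa using ha0
    | succ h ih =>
      have hPh : (0:ℝ) < σ * τ ^ (h : ℝ) * r := hP h
      have hPe : (0:ℝ) < (σ * τ ^ (h : ℝ) * r) ^ ((n : ℝ) - 1) :=
        Real.rpow_pos_of_pos hPh _
      set P : ℝ := σ * τ ^ (h : ℝ) * r with hPdef
      -- rewrite the target
      have e1 : τ ^ (γ * ((h + 1 : ℕ) : ℝ)) = τ ^ (γ * (h : ℝ)) * τ ^ γ := by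
        push_cast
        rw [mul_add, mul_one, Real.rpow_add hτ0]
      have e2 : (σ * τ ^ (((h + 1 : ℕ)) : ℝ) * r) ^ ((n : ℝ) - 1)
          = τ ^ ((n : ℝ) - 1) * P ^ ((n : ℝ) - 1) := by
        have : σ * τ ^ (((h + 1 : ℕ)) : ℝ) * r = τ * P := by
          push_cast
          rw [Real.rpow_add hτ0, Real.rpow_one, hPdef]
          ring
        rw [this, Real.mul_rpow hτ0.le hPh.le]
      have eτn : τ ^ (n : ℝ) = τ ^ ((1:ℝ) - γ) * (τ ^ γ * τ ^ ((n : ℝ) - 1)) := by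
        rw [← Real.rpow_add hτ0, ← Real.rpow_add hτ0]
        congr 1
        ring
      have eτnα : τ ^ ((n : ℝ) * α) = τ ^ γ * τ ^ ((n : ℝ) - 1) := by
        rw [hnα, Real.rpow_add hτ0]
        ring
      have ePγ : P ^ γ = σ ^ γ * τ ^ (γ * (h : ℝ)) * r ^ γ := by
        rw [hPdef, Real.mul_rpow (mul_pos hσ0 (Real.rpow_pos_of_pos hτ0 _)).le hr0.le,
          Real.mul_rpow hσ0.le (Real.rpow_pos_of_pos hτ0 _).le,
          ← Real.rpow_mul hτ0.le, mul_comm (h:ℝ) γ]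
      have ePnα : P ^ ((n : ℝ) * α) = P ^ ((n : ℝ) - 1) * P ^ γ := by
        rw [hnα, Real.rpow_add hPh]
      have t1 : C * (τ ^ (n : ℝ) * a h)
          ≤ 1 / 2 * (ε₁ * (τ ^ (γ * (h : ℝ)) * τ ^ γ) * (τ ^ ((n : ℝ) - 1) * P ^ ((n : ℝ) - 1))) := by
        calc C * (τ ^ (n : ℝ) * a h)
            = (C * τ ^ ((1:ℝ) - γ)) * ((τ ^ γ * τ ^ ((n : ℝ) - 1)) * a h) := by
              rw [eτn]; ring
          _ ≤ (1 / 2) * ((τ ^ γ * τ ^ ((n : ℝ) - 1)) * (ε₁ * τ ^ (γ * (h : ℝ)) * P ^ ((n : ℝ) - 1))) := by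
              apply mul_le_mul (by linarith)
                (mul_le_mul_of_nonneg_left ih (by positivity)) (mul_nonneg (by positivity) (hapos h)) (by norm_num)
          _ = 1 / 2 * (ε₁ * (τ ^ (γ * (h : ℝ)) * τ ^ γ) * (τ ^ ((n : ℝ) - 1) * P ^ ((n : ℝ) - 1))) := by
              ring
      have t2 : C * (τ ^ ((n : ℝ) * α) * P ^ ((n : ℝ) * α))
          ≤ 1 / 2 * (ε₁ * (τ ^ (γ * (h : ℝ)) * τ ^ γ) * (τ ^ ((n : ℝ) - 1) * P ^ ((n : ℝ) - 1))) := by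
        calc C * (τ ^ ((n : ℝ) * α) * P ^ ((n : ℝ) * α))
            = (C * σ ^ γ * r ^ γ) *
                (τ ^ γ * τ ^ ((n : ℝ) - 1) * τ ^ (γ * (h : ℝ)) * P ^ ((n : ℝ) - 1)) := by
              rw [eτnα, ePnα, ePγ]; ring
          _ ≤ (ε₁ / 2) * (τ ^ γ * τ ^ ((n : ℝ) - 1) * τ ^ (γ * (h : ℝ)) * P ^ ((n : ℝ) - 1)) := by
              exact mul_le_mul_of_nonneg_right hCσr (by positivity)
          _ = 1 / 2 * (ε₁ * (τ ^ (γ * (h : ℝ)) * τ ^ γ) * (τ ^ ((n : ℝ) - 1) * P ^ ((n : ℝ) - 1))) := by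
              ring
      have := hrec h
      rw [e1, e2]
      calc a (h + 1) ≤ C * (τ ^ (n : ℝ) * a h + τ ^ ((n : ℝ) * α) * P ^ ((n : ℝ) * α)) := this
        _ = C * (τ ^ (n : ℝ) * a h) + C * (τ ^ ((n : ℝ) * α) * P ^ ((n : ℝ) * α)) := by ring
        _ ≤ ε₁ * (τ ^ (γ * (h : ℝ)) * τ ^ γ) * (τ ^ ((n : ℝ) - 1) * P ^ ((n : ℝ) - 1)) := by
              linarith
  refine ⟨key, ?_⟩
  have hτγ1 : τ ^ γ < 1 := Real.rpow_lt_one hτ0.le hτ1 hγ0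
  have hτγ0 : (0:ℝ) ≤ τ ^ γ := (Real.rpow_pos_of_pos hτ0 _).le
  have hlim : Tendsto (fun h : ℕ => ε₁ * (τ ^ γ) ^ h) atTop (𝓝 0) := by
    have := (tendsto_pow_atTop_nhds_zero_of_lt_one hτγ0 hτγ1).const_mul ε₁
    simpa using this
  apply squeeze_zero (fun h => div_nonneg (hapos h) (Real.rpow_pos_of_pos (hP h) _).le) _ hlim
  intro h
  rw [div_le_iff₀ (Real.rpow_pos_of_pos (hP h) _)]
  have : ε₁ * (τ ^ γ) ^ h = ε₁ * τ ^ (γ * (h : ℝ)) := by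
    rw [← Real.rpow_natCast (τ ^ γ) h, ← Real.rpow_mul hτ0.le, mul_comm γ (h:ℝ)]
  rw [this, mul_assoc]
  have := key h
  linarith [key h]
end
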